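/- Let A be a finite set of action schemata whose arities are at most N, let P be a finite set of predicates whose arities are at most M, and fix k ∈ ℕ. Every pair consisting of a single goal fact and a length-k sequence of ground actions (each ground action being a schema from A instantiated with objects from an infinite universe O) mentions at most kN + M distinct objects, and is object-renaming equivalent (via some bijection of O) to such a pair whose objects all lie in a fixed subset of O of size kN + M. Consequently the number of such pairs up to object-renaming equivalence, over sequence lengths k = 0,…,C, is at most |P| · M^M · Σ_{k=0}^{C} (|A| · (kN + M)^N)^k. -/

import Mathlib

/-!
A pair mentions only finitely many objects: the goal fact at most `M` and each action at most
`N`. As `O` is infinite, every injection of a finite subset of `O` into `O` extends to a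
permutation of `O`, so every pair can be renamed so that the objects of its goal land in a fixed
`M`-element set `T₀` and all its objects in a fixed `(kN + M)`-element set `T ⊇ T₀`. Pairs of
this shape are counted directly: there are at most `|P| · M^M` goals over `T₀` and at most
`(|A| · (kN + M)^N)^k` action sequences over `T`.
-/

namespace Bison

/-- A fact is a predicate symbol together with a list of objects of the
predicate's arity. -/
def HLFact (P O : Type*) (ar : P → ℕ) : Type _ := (p : P) × (Fin (ar p) → O)

/-- A ground action: an action schema together with a list of argument
objects of the schema's arity. -/
def GAction (A O : Type*) (arA : A → ℕ) : Type _ := (a : A) × (Fin (arA a) → O)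

variable {P A O : Type*} {ar : P → ℕ} {arA : A → ℕ}

/-- The lifted map of a bijection `f : O ≃ O` on facts. -/
def liftFact (f : O ≃ O) (φ : HLFact P O ar) : HLFact P O ar :=
  ⟨φ.1, fun i => f (φ.2 i)⟩

/-- The lifted map of a bijection `f : O ≃ O` on ground actions. -/
def liftGAction (f : O ≃ O) (α : GAction A O arA) : GAction A O arA :=
  ⟨α.1, fun i => f (α.2 i)⟩

/-- The set of objects mentioned by a pair of a goal fact and a length-`k`
ground action sequence. -/
def mentions (k : ℕ) (φ : HLFact P O ar) (as : Fin k → GAction A O arA) :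
    Set O :=
  Set.range φ.2 ∪ ⋃ t : Fin k, Set.range (as t).2

/-- Object-renaming equivalence of (goal fact, ground action sequence)
pairs: some bijection of `O` maps the argument objects of one componentwise
onto those of the other. -/
def PairEquiv (k : ℕ) (φ φ' : HLFact P O ar)
    (as as' : Fin k → GAction A O arA) : Prop :=
  ∃ f : O ≃ O, liftFact f φ = φ' ∧ ∀ t : Fin k, liftGAction f (as t) = as' t

open Set

theorem _root_.Set.encard_range_le {ι α : Type*} (f : ι → α) :
    (range f).encard ≤ ENat.card ι := by
  rw [← image_univ, ← encard_univ]
  exact encard_image_le f univ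

theorem _root_.Set.ncard_range_le {ι α : Type*} [Finite ι] (f : ι → α) :
    (range f).ncard ≤ Nat.card ι :=
  (Nat.card_coe_set_eq _).symm.trans_le (Finite.card_range_le f)

section Perm

variable {α : Type*} [Infinite α] {s s₁ t t₁ : Set α}

theorem _root_.Set.Finite.exists_perm_eqOn_of_injOn {f : α → α} (hs : s.Finite)
    (hf : InjOn f s) : ∃ g : Equiv.Perm α, EqOn g f s := by
  have : Finite s := hs
  obtain ⟨g, hg⟩ :=
    Cardinal.extend_function_of_lt ⟨s.domRestrict f, injOn_iff_injective.1 hf⟩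
    (Cardinal.lt_aleph0_of_finite s |>.trans_le (Cardinal.aleph0_le_mk α)) ⟨Equiv.refl α⟩
  exact ⟨g, fun x hx => hg ⟨x, hx⟩⟩

theorem _root_.Set.Finite.exists_perm_mapsTo_of_encard_le (hs : s.Finite)
    (h : s.encard ≤ t.encard) : ∃ g : Equiv.Perm α, MapsTo g s t := by
  obtain ⟨f, hft, hf⟩ := hs.exists_injOn_of_encard_le h
  obtain ⟨g, hg⟩ := hs.exists_perm_eqOn_of_injOn hf
  exact ⟨g, fun x hx => hg hx ▸ hft hx⟩

theorem _root_.Set.Finite.exists_perm_mapsTo_mapsTo_of_encard_le (hs : s.Finite)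
    (hs₁ : s₁ ⊆ s) (ht₁ : t₁ ⊆ t) (h₁ : s₁.encard ≤ t₁.encard)
    (h₂ : (s \ s₁).encard ≤ (t \ t₁).encard) :
    ∃ g : Equiv.Perm α, MapsTo g s₁ t₁ ∧ MapsTo g s t := by
  classical
  obtain ⟨f₁, hf₁t, hf₁⟩ := (hs.subset hs₁).exists_injOn_of_encard_le h₁
  obtain ⟨f₂, hf₂t, hf₂⟩ := hs.sdiff.exists_injOn_of_encard_le h₂
  set f := s₁.piecewise f₁ f₂
  have hfs₁ : MapsTo f s₁ t₁ := fun x hx => by simpa [f, hx] using hf₁t hx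
  have hfs₂ : MapsTo f (s \ s₁) (t \ t₁) := fun x hx => by simpa [f, hx.2] using hf₂t hx
  have hs_eq : s = s₁ ∪ (s \ s₁) := (union_sdiff_cancel hs₁).symm
  have hf : InjOn f s := by
    rw [hs_eq, injOn_union disjoint_sdiff_right]
    refine ⟨hf₁.congr (piecewise_eqOn _ _ _).symm,
      hf₂.congr (piecewise_eqOn_compl _ _ _ |>.mono fun x hx => hx.2).symm, ?_⟩
    intro x hx y hy hxy
    exact (hfs₂ hy).2 (hxy ▸ hfs₁ hx)
  obtain ⟨g, hg⟩ := hs.exists_perm_eqOn_of_injOn hf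
  have hft : MapsTo f s t :=
    hs_eq ▸ (hfs₁.mono_right ht₁).union (hfs₂.mono_right sdiff_subset)
  exact ⟨g, hfs₁.congr (hg.mono hs₁).symm, hft.congr hg.symm⟩

end Perm

theorem natCard_sigma_fin_fun_le {ι X : Type*} [Fintype ι] [Finite X] {n : ι → ℕ} {M : ℕ}
    (hn : ∀ i, n i ≤ M) (hM : M ≤ Nat.card X) :
    Nat.card ((i : ι) × (Fin (n i) → X)) ≤ Fintype.card ι * Nat.card X ^ M := by
  have hfiber (i : ι) : Nat.card X ^ n i ≤ Nat.card X ^ M := by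
    rcases (Nat.card X).eq_zero_or_pos with hX | hX
    · simp [show n i = 0 by have := hn i; omega, show M = 0 by omega]
    · exact Nat.pow_le_pow_right hX (hn i)
  rw [Nat.card_sigma, ← smul_eq_mul, ← Finset.card_univ, ← Finset.sum_const]
  exact Finset.sum_le_sum fun i _ => by simpa [Nat.card_fun] using hfiber i

theorem encard_iUnion_range_args_le {N k : ℕ} (harA : ∀ a, arA a ≤ N)
    (as : Fin k → GAction A O arA) : (⋃ t, range (as t).2).encard ≤ k * N := by
  calc (⋃ t, range (as t).2).encard ≤ ∑ t, (range (as t).2).encard :=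
        encard_iUnion_le_of_fintype _
    _ ≤ ∑ _t : Fin k, (N : ℕ∞) := Finset.sum_le_sum fun t _ =>
        (encard_range_le _).trans (by simpa using harA (as t).1)
    _ = k * N := by simp

theorem encard_mentions_le {N M k : ℕ} (harA : ∀ a, arA a ≤ N) (har : ∀ p, ar p ≤ M)
    (φ : HLFact P O ar) (as : Fin k → GAction A O arA) :
    (mentions k φ as).encard ≤ (k * N + M : ℕ) := by
  calc (mentions k φ as).encard ≤ (range φ.2).encard + (⋃ t, range (as t).2).encard :=
        encard_union_le _ _
    _ ≤ M + k * N := add_le_add ((encard_range_le _).trans (by simpa using har φ.1))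
        (encard_iUnion_range_args_le harA as)
    _ = (k * N + M : ℕ) := by push_cast; ring

theorem mentions_lift (f : O ≃ O) (k : ℕ) (φ : HLFact P O ar)
    (as : Fin k → GAction A O arA) :
    mentions k (liftFact f φ) (fun t => liftGAction f (as t)) = f '' mentions k φ as := by
  simp only [mentions, liftFact, liftGAction, image_union, image_iUnion, ← range_comp]
  rfl

instance [Finite P] [Finite O] : Finite (HLFact P O ar) :=
  inferInstanceAs (Finite ((p : P) × (Fin (ar p) → O)))

instance [Finite A] [Finite O] : Finite (GAction A O arA) :=
  inferInstanceAs (Finite ((a : A) × (Fin (arA a) → O)))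

/-- Confining the goal's objects to the smaller set `T₀` is what yields the factor `M ^ M`
rather than `(kN + M) ^ M` in the count. -/
def pairsWithin (k : ℕ) (T₀ T : Finset O) :
    Set (HLFact P O ar × (Fin k → GAction A O arA)) :=
  {pr | range pr.1.2 ⊆ T₀ ∧ mentions k pr.1 pr.2 ⊆ T}

def valPair {k : ℕ} (T₀ T : Finset O) (x : HLFact P T₀ ar × (Fin k → GAction A T arA)) :
    HLFact P O ar × (Fin k → GAction A O arA) :=
  (⟨x.1.1, fun i => x.1.2 i⟩, fun t => ⟨(x.2 t).1, fun i => (x.2 t).2 i⟩)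

theorem pairsWithin_subset_range_valPair (k : ℕ) (T₀ T : Finset O) :
    pairsWithin (ar := ar) (arA := arA) k T₀ T ⊆ range (valPair T₀ T) := by
  rintro ⟨φ, as⟩ ⟨hφ, has⟩
  refine ⟨(⟨φ.1, fun i => ⟨φ.2 i, hφ (mem_range_self i)⟩⟩,
    fun t => ⟨(as t).1, fun i => ⟨(as t).2 i, has ?_⟩⟩), rfl⟩
  exact mem_union_right _ (mem_iUnion.2 ⟨t, mem_range_self i⟩)

theorem pairsWithin_finite [Finite P] [Finite A] (k : ℕ) (T₀ T : Finset O) :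
    (pairsWithin (ar := ar) (arA := arA) k T₀ T).Finite :=
  (finite_range _).subset (pairsWithin_subset_range_valPair k T₀ T)

theorem ncard_pairsWithin_le [Fintype P] [Fintype A] {N M : ℕ} (harA : ∀ a, arA a ≤ N)
    (har : ∀ p, ar p ≤ M) (k : ℕ) (T₀ T : Finset O) (hM : M ≤ T₀.card)
    (hN : 0 < k → N ≤ T.card) :
    (pairsWithin (ar := ar) (arA := arA) k T₀ T).ncard ≤
      Fintype.card P * T₀.card ^ M * (Fintype.card A * T.card ^ N) ^ k := by
  refine (ncard_le_ncard (pairsWithin_subset_range_valPair k T₀ T) (finite_range _)).trans <|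
    (ncard_range_le _).trans ?_
  have hfacts : Nat.card (HLFact P T₀ ar) ≤ Fintype.card P * T₀.card ^ M :=
    Nat.card_eq_finsetCard T₀ ▸
      natCard_sigma_fin_fun_le har (Nat.card_eq_finsetCard T₀ ▸ hM)
  have hactions : Nat.card (GAction A T arA) ^ k ≤ (Fintype.card A * T.card ^ N) ^ k := by
    rcases k.eq_zero_or_pos with rfl | hk
    · simp
    · refine Nat.pow_le_pow_left ?_ k
      exact Nat.card_eq_finsetCard T ▸
        natCard_sigma_fin_fun_le harA (Nat.card_eq_finsetCard T ▸ hN hk)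
  rw [Nat.card_prod, Nat.card_fun, Nat.card_fin]
  exact Nat.mul_le_mul hfacts hactions

theorem exists_pairEquiv_mem_pairsWithin [Infinite O] {N M k : ℕ} (harA : ∀ a, arA a ≤ N)
    (har : ∀ p, ar p ≤ M) (φ : HLFact P O ar) (as : Fin k → GAction A O arA)
    {T₀ T : Finset O} (hT₀ : T₀ ⊆ T) (hM : M ≤ T₀.card)
    (hN : T₀.card + k * N ≤ T.card) :
    ∃ pr ∈ pairsWithin k T₀ T, PairEquiv k φ pr.1 as pr.2 := by
  classical
  have hgoal : (range φ.2).encard ≤ (T₀ : Set O).encard := by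
    rw [encard_coe_eq_coe_finsetCard]
    exact (encard_range_le _).trans (by simpa using (har φ.1).trans hM)
  have hrest : (mentions k φ as \ range φ.2).encard ≤ ((T : Set O) \ T₀).encard := by
    rw [← Finset.coe_sdiff, encard_coe_eq_coe_finsetCard, Finset.card_sdiff_of_subset hT₀]
    calc (mentions k φ as \ range φ.2).encard ≤ (⋃ t, range (as t).2).encard :=
          encard_le_encard <| by rw [mentions, union_sdiff_left]; exact sdiff_subset
      _ ≤ k * N := encard_iUnion_range_args_le harA as
      _ ≤ (T.card - T₀.card : ℕ) := by exact_mod_cast (by omega)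
  obtain ⟨g, hg₀, hg⟩ := (finite_of_encard_le_coe (encard_mentions_le harA har φ as))
    |>.exists_perm_mapsTo_mapsTo_of_encard_le subset_union_left (Finset.coe_subset.2 hT₀)
      hgoal hrest
  refine ⟨(liftFact g φ, fun t => liftGAction g (as t)), ⟨?_, ?_⟩, g, rfl, fun _ => rfl⟩
  · exact range_comp g φ.2 ▸ hg₀.image_subset
  · exact mentions_lift g k φ as ▸ hg.image_subset

/-- For finite `A` with schema arities ≤ `N`, finite `P` with predicate
arities ≤ `M`, and infinite `O`:
(1) every pair of a goal fact and a length-`k` ground action sequence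
mentions at most `kN + M` distinct objects;
(2) given any fixed subset `T` of `O` of size `kN + M`, every such pair is
object-renaming equivalent to a pair whose objects all lie in `T`; and
(3) over sequence lengths `k = 0, …, C`, there is a family of finite sets of
pairs meeting every equivalence class, of total cardinality at most
`|P| · M^M · Σ_{k=0}^{C} (|A| · (kN + M)^N)^k`. -/
theorem pairs_up_to_renaming_finite [Fintype A] [Fintype P] [Infinite O]
    (N M C : ℕ) (harA : ∀ a : A, arA a ≤ N) (har : ∀ p : P, ar p ≤ M) :
    (∀ (k : ℕ) (φ : HLFact P O ar) (as : Fin k → GAction A O arA),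
      (mentions k φ as).Finite ∧ (mentions k φ as).ncard ≤ k * N + M) ∧
    (∀ (k : ℕ) (φ : HLFact P O ar) (as : Fin k → GAction A O arA)
      (T : Finset O), T.card = k * N + M →
      ∃ f : O ≃ O,
        mentions k (liftFact f φ) (fun t => liftGAction f (as t)) ⊆ ↑T) ∧
    (∃ S : (k : Fin (C + 1)) →
        Set (HLFact P O ar × (Fin (k : ℕ) → GAction A O arA)),
      (∀ k, (S k).Finite) ∧
      (∑ k : Fin (C + 1), (S k).ncard) ≤
        Fintype.card P * M ^ M *
          ∑ k ∈ Finset.range (C + 1),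
            (Fintype.card A * (k * N + M) ^ N) ^ k ∧
      ∀ (k : Fin (C + 1)) (φ : HLFact P O ar)
        (as : Fin (k : ℕ) → GAction A O arA),
        ∃ pr ∈ S k, PairEquiv (k : ℕ) φ pr.1 as pr.2) := by
  refine ⟨fun k φ as => encard_le_coe_iff_finite_ncard_le.1 (encard_mentions_le harA har φ as),
    fun k φ as T hT => ?_, ?_⟩
  · obtain ⟨g, hg⟩ := (finite_of_encard_le_coe (encard_mentions_le harA har φ as))
      |>.exists_perm_mapsTo_of_encard_le <| by
        rw [encard_coe_eq_coe_finsetCard, hT]; exact encard_mentions_le harA har φ as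
    exact ⟨g, mentions_lift g k φ as ▸ hg.image_subset⟩
  obtain ⟨T₀, hT₀⟩ := Infinite.exists_subset_card_eq O M
  choose T hT₀T hT using fun k : ℕ =>
    Infinite.exists_superset_card_eq T₀ (k * N + M) (by omega)
  refine ⟨fun k => pairsWithin k T₀ (T k), fun k => pairsWithin_finite k T₀ (T k), ?_,
    fun k φ as => exists_pairEquiv_mem_pairsWithin harA har φ as (hT₀T k) hT₀.ge
      (by rw [hT, hT₀]; omega)⟩
  calc ∑ k : Fin (C + 1), (pairsWithin k T₀ (T k)).ncard
      ≤ ∑ k : Fin (C + 1),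
          Fintype.card P * M ^ M * (Fintype.card A * (k * N + M) ^ N) ^ (k : ℕ) :=
        Finset.sum_le_sum fun k _ => by
          have := ncard_pairsWithin_le harA har k T₀ (T k) hT₀.ge fun hk => by
            rw [hT]; exact (Nat.le_mul_of_pos_left N hk).trans (Nat.le_add_right _ _)
          rwa [hT₀, hT] at this
    _ = _ := by
      rw [Finset.mul_sum, Fin.sum_univ_eq_sum_range
        (fun k => Fintype.card P * M ^ M * (Fintype.card A * (k * N + M) ^ N) ^ k)]

end Bison
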